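/- Let X1 be uniform on [1:N] with N ≥ 4 even; let Y be binary, related to the parity of X1 with P(Y ≠ parity(X1)) = p2. For any random variables X̂1 (over [1:N]) with P(X1 ≠ X̂1) ≤ D1 ≤ 1/2 and any Ŝ, it holds that I(X1; X̂1, Ŝ | Y) ≥ h_b(p2) + log(N/2) − h_b(D1) − D1 log(N − 1). -/

import Mathlib

open scoped BigOperators

/-- Binary entropy function (base-2 logs). -/
noncomputable def hb (q : ℝ) : ℝ := -(q * Real.logb 2 q) - (1 - q) * Real.logb 2 (1 - q)

/-- Joint pmf of `(fA, fB, fC)` induced by a pmf `μ` on a finite sample space. -/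
noncomputable def jointP {Ω α β γ : Type*} [Fintype Ω]
    [DecidableEq α] [DecidableEq β] [DecidableEq γ]
    (μ : Ω → ℝ) (fA : Ω → α) (fB : Ω → β) (fC : Ω → γ) (a : α) (b : β) (c : γ) : ℝ :=
  ∑ ω, if fA ω = a ∧ fB ω = b ∧ fC ω = c then μ ω else 0

/-- Conditional mutual information `I(A; B | C)` (base-2) of finite random variables. -/
noncomputable def cmi {Ω α β γ : Type*} [Fintype Ω] [Fintype α] [Fintype β] [Fintype γ]
    [DecidableEq α] [DecidableEq β] [DecidableEq γ]
    (μ : Ω → ℝ) (fA : Ω → α) (fB : Ω → β) (fC : Ω → γ) : ℝ :=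
  ∑ a, ∑ b, ∑ c,
    jointP μ fA fB fC a b c *
      Real.logb 2 (jointP μ fA fB fC a b c * (∑ a', ∑ b', jointP μ fA fB fC a' b' c) /
        ((∑ b', jointP μ fA fB fC a b' c) * (∑ a', jointP μ fA fB fC a' b c)))

/-!
`I(X₁; X̂₁Ŝ | Y) = H(X₁ | Y) - H(X₁ | X̂₁ŜY)`. Given `Y`, `X₁` has mass `2(1 - p₂)/N` on each of the
`N/2` points of one parity and `2p₂/N` on each of the others, so `H(X₁ | Y) = h_b(p₂) + log(N/2)`.
Since `X̂₁` is a function of the conditioning variables, Fano's inequality gives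
`H(X₁ | X̂₁ŜY) ≤ h_b(Pₑ) + Pₑ log(N - 1)` with `Pₑ = P(X₁ ≠ X̂₁) ≤ D₁`, and this bound is the
`N`-ary entropy of `Pₑ`, which increases on `[0, 1 - 1/N] ∋ D₁`.
-/

open Real Finset

-- `H(A | D)` in bits, where `w a d` is the joint pmf of `(A, D)`
noncomputable def condEntropy {α δ : Type*} [Fintype α] [Fintype δ] (w : α → δ → ℝ) : ℝ :=
  -∑ a, ∑ d, w a d * logb 2 (w a d / ∑ a', w a' d)

lemma mul_logb_div_of_ne_zero (x : ℝ) {y : ℝ} (hy : y ≠ 0) :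
    x * logb 2 (x / y) = x * logb 2 x - x * logb 2 y := by
  rcases eq_or_ne x 0 with rfl | hx
  · simp
  · rw [logb_div hx hy, mul_sub]

lemma mul_logb_mul_div_mul {x s u v : ℝ} (hx : 0 ≤ x) (hs : x ≤ s) (hu : x ≤ u) (hv : x ≤ v) :
    x * logb 2 (x * s / (u * v)) = x * logb 2 (x / v) - x * logb 2 (u / s) := by
  rcases hx.eq_or_lt with rfl | hx
  · simp
  have hs := hx.trans_le hs
  have hu := hx.trans_le hu
  have hv := hx.trans_le hv
  rw [logb_div (by positivity) (by positivity), logb_mul hx.ne' hs.ne', logb_mul hu.ne' hv.ne',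
    logb_div hx.ne' hv.ne', logb_div hu.ne' hs.ne']
  ring

lemma single_le_sum₂ {α δ : Type*} [Fintype α] [Fintype δ] {f : α → δ → ℝ}
    (hf : ∀ a d, 0 ≤ f a d) (a : α) (d : δ) : f a d ≤ ∑ a', ∑ d', f a' d' :=
  (single_le_sum (fun d' _ => hf a d') (mem_univ d)).trans
    (single_le_sum (fun a' _ => sum_nonneg fun d' _ => hf a' d') (mem_univ a))

section Gibbs

variable {α δ : Type*} [Fintype α] [Fintype δ]

lemma sum_mul_logb_le_sum_mul_logb_div_sum (p q : α → ℝ) (hp : ∀ a, 0 ≤ p a)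
    (hq : ∀ a, 0 ≤ q a) (hq1 : ∑ a, q a ≤ 1) (hsupp : ∀ a, 0 < p a → 0 < q a) :
    ∑ a, p a * logb 2 (q a) ≤ ∑ a, p a * logb 2 (p a / ∑ a', p a') := by
  set P := ∑ a', p a'
  have hP : 0 ≤ P := sum_nonneg fun a _ => hp a
  have hlog2 : 0 < log 2 := log_pos one_lt_two
  have key : ∀ a, p a * logb 2 (q a) - p a * logb 2 (p a / P) ≤ (q a * P - p a) / log 2 := by
    intro a
    rcases (hp a).eq_or_lt with h0 | h0
    · rw [← h0]
      simp only [zero_mul, sub_zero]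
      have := hq a
      positivity
    have hPpos : 0 < P := h0.trans_le (single_le_sum (fun a _ => hp a) (mem_univ a))
    have hqa := hsupp a h0
    -- `log t ≤ t - 1` at `t = q P / p`
    calc p a * logb 2 (q a) - p a * logb 2 (p a / P)
        = p a * log (q a * P / p a) / log 2 := by
          rw [← mul_sub, ← logb_div hqa.ne' (by positivity), logb, div_div_eq_mul_div]
          ring
      _ ≤ p a * (q a * P / p a - 1) / log 2 := by
          gcongr
          exact log_le_sub_one_of_pos (by positivity)
      _ = (q a * P - p a) / log 2 := by field_simp
  have hsum : ∑ a, (q a * P - p a) / log 2 ≤ 0 := by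
    rw [← sum_div, sum_sub_distrib, ← sum_mul]
    apply div_nonpos_of_nonpos_of_nonneg _ hlog2.le
    nlinarith [mul_le_mul_of_nonneg_right hq1 hP]
  have := sum_le_sum fun a (_ : a ∈ univ) => key a
  rw [sum_sub_distrib] at this
  linarith

lemma sum_mul_logb_le_neg_condEntropy (p q : α → δ → ℝ) (hp : ∀ a d, 0 ≤ p a d)
    (hq : ∀ a d, 0 ≤ q a d) (hq1 : ∀ d, ∑ a, q a d ≤ 1)
    (hsupp : ∀ a d, 0 < p a d → 0 < q a d) :
    ∑ a, ∑ d, p a d * logb 2 (q a d) ≤ -condEntropy p := by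
  rw [condEntropy, neg_neg, sum_comm, sum_comm (γ := α)]
  exact sum_le_sum fun d _ => sum_mul_logb_le_sum_mul_logb_div_sum (p · d) (q · d)
    (hp · d) (hq · d) (hq1 d) (hsupp · d)

end Gibbs

lemma sum_ite_eq_one_sub_else_div {α : Type*} [Fintype α] [DecidableEq α] (x : α) (t : ℝ)
    (hα : 1 < Fintype.card α) :
    ∑ a, (if a = x then 1 - t else t / (Fintype.card α - 1)) = 1 := by
  have hn : (Fintype.card α : ℝ) - 1 ≠ 0 := by
    have : (1 : ℝ) < Fintype.card α := by exact_mod_cast hα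
    linarith
  rw [← add_sum_erase _ _ (mem_univ x), if_pos rfl,
    sum_congr rfl fun a ha => if_neg (ne_of_mem_erase ha), sum_const,
    card_erase_of_mem (mem_univ x), card_univ, nsmul_eq_mul, Nat.cast_sub hα.le, Nat.cast_one]
  field_simp
  ring

/-- **Fano's inequality**. -/
theorem condEntropy_le_hb_add_mul_logb {α δ : Type*} [Fintype α] [Fintype δ] [DecidableEq α]
    (w : α → δ → ℝ) (g : δ → α) (hw : ∀ a d, 0 ≤ w a d)
    (hw1 : ∑ a, ∑ d, w a d = 1) (hα : 1 < Fintype.card α) {Pe : ℝ}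
    (hPe : ∑ a, ∑ d, (if a = g d then 0 else w a d) = Pe) :
    condEntropy w ≤ hb Pe + Pe * logb 2 (Fintype.card α - 1) := by
  have hn : (0 : ℝ) < Fintype.card α - 1 := by
    have : (1 : ℝ) < Fintype.card α := by exact_mod_cast hα
    linarith
  set n : ℝ := (Fintype.card α : ℝ)
  have hwc : ∀ a d, 0 ≤ if a = g d then w a d else 0 := fun a d => by split_ifs <;> simp [hw]
  have hwe : ∀ a d, 0 ≤ if a = g d then 0 else w a d := fun a d => by split_ifs <;> simp [hw]
  have hcorrect : ∑ a, ∑ d, (if a = g d then w a d else 0) = 1 - Pe := by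
    rw [← hw1, ← hPe, eq_sub_iff_add_eq, ← sum_add_distrib]
    refine sum_congr rfl fun a _ => ?_
    rw [← sum_add_distrib]
    exact sum_congr rfl fun d _ => by split_ifs <;> simp
  have hcorrect_le : ∀ a d, a = g d → w a d ≤ 1 - Pe := fun a d h => by
    simpa [h, ← hcorrect] using single_le_sum₂ hwc a d
  have herror_le : ∀ a d, a ≠ g d → w a d ≤ Pe := fun a d h => by
    simpa [h, ← hPe] using single_le_sum₂ hwe a d
  have hPe0 : 0 ≤ Pe := hPe ▸ sum_nonneg fun a _ => sum_nonneg fun d _ => hwe a d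
  have hPe1 : Pe ≤ 1 := by
    linarith [hcorrect ▸ sum_nonneg fun a _ => sum_nonneg fun d _ => hwc a d]
  -- Gibbs' inequality against the law putting `1 - Pe` on the guess `g d`, spread evenly elsewhere
  set q : α → δ → ℝ := fun a d => if a = g d then 1 - Pe else Pe / (n - 1)
  have hq : ∀ a d, 0 ≤ q a d := fun a d => by
    simp only [q]
    split_ifs
    · linarith
    · positivity
  have hq1 : ∀ d, ∑ a, q a d ≤ 1 := fun d => (sum_ite_eq_one_sub_else_div (g d) Pe hα).le
  have hsupp : ∀ a d, 0 < w a d → 0 < q a d := fun a d h => by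
    simp only [q]
    split_ifs with had
    · linarith [hcorrect_le a d had]
    · exact div_pos (h.trans_le (herror_le a d had)) hn
  have hcross : ∑ a, ∑ d, w a d * logb 2 (q a d) = -(hb Pe + Pe * logb 2 (n - 1)) := by
    have hsplit : ∀ a d, w a d * logb 2 (q a d) = (if a = g d then w a d else 0) * logb 2 (1 - Pe)
        + (if a = g d then 0 else w a d) * logb 2 (Pe / (n - 1)) := fun a d => by
      simp only [q]; split_ifs <;> simp
    simp only [hsplit, sum_add_distrib, ← sum_mul, hcorrect, hPe,
      mul_logb_div_of_ne_zero Pe hn.ne', hb]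
    ring
  linarith [sum_mul_logb_le_neg_condEntropy w q hw hq hq1 hsupp]

lemma hb_add_mul_logb_eq_qaryEntropy (n : ℕ) (t : ℝ) :
    hb t + t * logb 2 (n - 1) = qaryEntropy n t / log 2 := by
  have hcast : (((n : ℤ) - 1 : ℤ) : ℝ) = n - 1 := by push_cast; ring
  simp only [hb, qaryEntropy, binEntropy, logb, log_inv, hcast]
  ring

lemma hb_add_mul_logb_le {n : ℕ} (hn : 2 ≤ n) {x y : ℝ} (hx : 0 ≤ x) (hxy : x ≤ y)
    (hy : y ≤ 1 - 1 / n) : hb x + x * logb 2 (n - 1) ≤ hb y + y * logb 2 (n - 1) := by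
  rw [hb_add_mul_logb_eq_qaryEntropy, hb_add_mul_logb_eq_qaryEntropy]
  have hmono := (qaryEntropy_strictMonoOn hn).monotoneOn ⟨hx, hxy.trans hy⟩ ⟨hx.trans hxy, hy⟩ hxy
  gcongr

lemma sum_fin_ite_even_succ {N : ℕ} (hN : Even N) (u v : ℝ) :
    ∑ a : Fin N, (if Even (a.val + 1) then u else v) = N / 2 * (u + v) := by
  obtain ⟨k, rfl⟩ := hN
  rw [Fin.sum_univ_eq_sum_range (fun i => if Even (i + 1) then u else v)]
  induction k with
  | zero => simp
  | succ k ih =>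
    rw [show k + 1 + (k + 1) = k + k + 1 + 1 by ring, sum_range_succ, sum_range_succ, ih,
      if_neg (by simp [parity_simps]), if_pos (by simp [parity_simps])]
    push_cast
    ring

lemma condEntropy_parity_channel {N : ℕ} (hN0 : N ≠ 0) (hN : Even N) (p : ℝ) (w : Fin N → Fin 2 → ℝ)
    (hw0 : ∀ a, w a 0 = 1 / N * (if Even (a.val + 1) then 1 - p else p))
    (hw1 : ∀ a, w a 1 = 1 / N * (if Even (a.val + 1) then p else 1 - p)) :
    condEntropy w = hb p + logb 2 (N / 2) := by
  have hNR : (N : ℝ) ≠ 0 := by exact_mod_cast hN0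
  have hcol : ∀ c, ∑ a, w a c = 1 / 2 := fun c => by
    fin_cases c
    · simp only [Fin.zero_eta, hw0, ← mul_sum, sum_fin_ite_even_succ hN]
      field_simp; ring
    · simp only [Fin.mk_one, hw1, ← mul_sum, sum_fin_ite_even_succ hN]
      field_simp; ring
  set e := (1 - p) * logb 2 ((1 - p) / (N / 2)) + p * logb 2 (p / (N / 2))
  have hrow : ∀ a, ∑ c, w a c * logb 2 (w a c / (1 / 2)) = e / N := fun a => by
    have hscale : ∀ x : ℝ, 1 / N * x / (1 / 2) = x / (N / 2) := fun x => by field_simp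
    rw [Fin.sum_univ_two, hw0, hw1]
    split_ifs <;> simp only [hscale, e] <;> ring
  simp only [condEntropy, hcol, hrow, sum_const, card_univ, Fintype.card_fin, nsmul_eq_mul, e,
    mul_logb_div_of_ne_zero _ (by positivity : (N : ℝ) / 2 ≠ 0), hb]
  field_simp
  ring

section JointLaw

variable {Ω α β γ : Type*} [Fintype Ω] [DecidableEq α] [DecidableEq β] [DecidableEq γ]
  (μ : Ω → ℝ) (fA : Ω → α) (fB : Ω → β) (fC : Ω → γ)

lemma jointP_nonneg (hμ : ∀ ω, 0 ≤ μ ω) (a : α) (b : β) (c : γ) :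
    0 ≤ jointP μ fA fB fC a b c :=
  sum_nonneg fun ω _ => by split_ifs <;> simp [hμ ω]

lemma sum_jointP_mul [Fintype α] [Fintype β] [Fintype γ] (F : α → β → γ → ℝ) :
    ∑ a, ∑ b, ∑ c, jointP μ fA fB fC a b c * F a b c = ∑ ω, μ ω * F (fA ω) (fB ω) (fC ω) := by
  simp only [jointP, sum_mul, ite_mul, zero_mul]
  simp_rw [sum_comm (s := (univ : Finset γ)) (t := (univ : Finset Ω)),
    sum_comm (s := (univ : Finset β)) (t := (univ : Finset Ω)),
    sum_comm (s := (univ : Finset α)) (t := (univ : Finset Ω))]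
  simp [ite_and, sum_ite_eq]

lemma sum_jointP_eq_sum_ite [Fintype β] (a : α) (c : γ) :
    ∑ b, jointP μ fA fB fC a b c = ∑ ω, if fA ω = a ∧ fC ω = c then μ ω else 0 := by
  simp only [jointP]
  rw [sum_comm]
  simp [ite_and, sum_ite_eq]

theorem cmi_eq_condEntropy_sub [Fintype α] [Fintype β] [Fintype γ] (hμ : ∀ ω, 0 ≤ μ ω) :
    cmi μ fA fB fC = condEntropy (fun a c => ∑ b, jointP μ fA fB fC a b c)
      - condEntropy (fun a (d : β × γ) => jointP μ fA fB fC a d.1 d.2) := by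
  rw [cmi]
  set J := jointP μ fA fB fC
  have hJ := jointP_nonneg μ fA fB fC hμ
  have hterm : ∀ a b c, J a b c * logb 2 (J a b c * (∑ a', ∑ b', J a' b' c) /
      ((∑ b', J a b' c) * (∑ a', J a' b c))) = J a b c * logb 2 (J a b c / ∑ a', J a' b c)
        - J a b c * logb 2 ((∑ b', J a b' c) / ∑ a', ∑ b', J a' b' c) :=
    fun a b c => mul_logb_mul_div_mul (hJ a b c)
      (single_le_sum₂ (f := fun a' b' => J a' b' c) (fun _ _ => hJ ..) a b)
      (single_le_sum (fun b' _ => hJ a b' c) (mem_univ b))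
      (single_le_sum (fun a' _ => hJ a' b c) (mem_univ a))
  simp only [condEntropy, hterm, sum_sub_distrib, Fintype.sum_prod_type]
  simp only [sum_mul]
  simp_rw [sum_comm (s := (univ : Finset γ)) (t := (univ : Finset β))]
  ring

end JointLaw

lemma sum_jointP_zero_add_sum_jointP_one {Ω α β : Type*} [Fintype Ω] [Fintype β] [DecidableEq α]
    [DecidableEq β] (μ : Ω → ℝ) (fA : Ω → α) (fB : Ω → β) (fC : Ω → Fin 2) (a : α) :
    ∑ b, jointP μ fA fB fC a b 0 + ∑ b, jointP μ fA fB fC a b 1 =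
      ∑ ω, if fA ω = a then μ ω else 0 := by
  rw [sum_jointP_eq_sum_ite, sum_jointP_eq_sum_ite, ← sum_add_distrib]
  refine sum_congr rfl fun ω _ => ?_
  rcases (by omega : fC ω = 0 ∨ fC ω = 1) with h | h <;> simp [h]

theorem integer_classification_converse_general
    {Ω T : Type*} [Fintype Ω] [Fintype T] [DecidableEq T]
    (N : ℕ) (hN : 4 ≤ N) (hNeven : Even N)
    (μ : Ω → ℝ) (hμ0 : ∀ ω, 0 ≤ μ ω) (hμ1 : ∑ ω, μ ω = 1)
    (X1 : Ω → Fin N) (Y : Ω → Fin 2) (X1h : Ω → Fin N) (Sh : Ω → T)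
    (p2 D1 : ℝ) (hD11 : D1 ≤ 1/2)
    -- X1 is uniform on [1:N]
    (hunif : ∀ x : Fin N, (∑ ω, if X1 ω = x then μ ω else 0) = 1 / N)
    -- P(X1 = x, Y = 0) = (1/N)·(1 − p2) if x is even, (1/N)·p2 if x is odd
    (hXY : ∀ x : Fin N, (∑ ω, if X1 ω = x ∧ Y ω = 0 then μ ω else 0) =
      (1 / N) * (if Even (x.val + 1) then 1 - p2 else p2))
    -- distortion constraint
    (hdist : (∑ ω, if X1 ω ≠ X1h ω then μ ω else 0) ≤ D1) :
    cmi μ X1 (fun ω => (X1h ω, Sh ω)) Y ≥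
      hb p2 + Real.logb 2 ((N : ℝ) / 2) - hb D1 - D1 * Real.logb 2 ((N : ℝ) - 1) := by
  set B := fun ω => (X1h ω, Sh ω)
  have hY0 : ∀ a, ∑ b, jointP μ X1 B Y a b 0 = 1 / N * (if Even (a.val + 1) then 1 - p2 else p2) :=
    fun a => (sum_jointP_eq_sum_ite μ X1 B Y a 0).trans (hXY a)
  have hY1 : ∀ a, ∑ b, jointP μ X1 B Y a b 1 = 1 / N * (if Even (a.val + 1) then p2 else 1 - p2) :=
    fun a => by
      have := sum_jointP_zero_add_sum_jointP_one μ X1 B Y a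
      rw [hY0, hunif] at this
      split_ifs at this ⊢ <;> linarith
  have htot : ∑ a, ∑ d : (Fin N × T) × Fin 2, jointP μ X1 B Y a d.1 d.2 = 1 := by
    simpa [Fintype.sum_prod_type, hμ1] using sum_jointP_mul μ X1 B Y (fun _ _ _ => 1)
  have hPe : ∑ a, ∑ d : (Fin N × T) × Fin 2,
      (if a = d.1.1 then 0 else jointP μ X1 B Y a d.1 d.2) =
        ∑ ω, if X1 ω ≠ X1h ω then μ ω else 0 := by
    simpa [Fintype.sum_prod_type, mul_ite, ite_not, B] using
      sum_jointP_mul μ X1 B Y (fun a b _ => if a = b.1 then 0 else 1)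
  set Pe := ∑ ω, if X1 ω ≠ X1h ω then μ ω else 0
  have hPe0 : 0 ≤ Pe := sum_nonneg fun ω _ => by split_ifs <;> simp [hμ0 ω]
  have hD1 : D1 ≤ 1 - 1 / N := by
    have : (2 : ℝ) ≤ N := by exact_mod_cast (by omega : 2 ≤ N)
    linarith [one_div_le_one_div_of_le two_pos this]
  have hFano := condEntropy_le_hb_add_mul_logb _ (fun d => d.1.1)
    (fun a d => jointP_nonneg μ _ _ _ hμ0 _ _ _) htot (by rw [Fintype.card_fin]; omega) hPe
  have hmono := hb_add_mul_logb_le (n := N) (by omega) hPe0 hdist hD1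
  rw [Fintype.card_fin] at hFano
  rw [cmi_eq_condEntropy_sub μ _ _ _ hμ0, condEntropy_parity_channel (by omega) hNeven p2 _ hY0 hY1]
  linarith

/-- for `X1` uniform on `[1:N]` (`N ≥ 4` even), binary `Y` related to
the parity of `X1` with crossover `p2`, and any `X̂1, Ŝ` with `P(X1 ≠ X̂1) ≤ D1 ≤ 1/2`,
`I(X1; X̂1, Ŝ | Y) ≥ h_b(p2) + log(N/2) − h_b(D1) − D1·log(N − 1)`.
Here `x : Fin N` encodes the integer `x.val + 1 ∈ [1:N]`. -/
theorem integer_classification_converse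
    {Ω T : Type*} [Fintype Ω] [Fintype T] [DecidableEq T]
    (N : ℕ) (hN : 4 ≤ N) (hNeven : Even N)
    (μ : Ω → ℝ) (hμ0 : ∀ ω, 0 ≤ μ ω) (hμ1 : ∑ ω, μ ω = 1)
    (X1 : Ω → Fin N) (Y : Ω → Fin 2) (X1h : Ω → Fin N) (Sh : Ω → T)
    (p2 D1 : ℝ) (hp20 : 0 ≤ p2) (hp21 : p2 ≤ 1/2) (hD10 : 0 ≤ D1) (hD11 : D1 ≤ 1/2)
    -- X1 is uniform on [1:N]
    (hunif : ∀ x : Fin N, (∑ ω, if X1 ω = x then μ ω else 0) = 1 / N)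
    -- P(X1 = x, Y = 0) = (1/N)·(1 − p2) if x is even, (1/N)·p2 if x is odd
    (hXY : ∀ x : Fin N, (∑ ω, if X1 ω = x ∧ Y ω = 0 then μ ω else 0) =
      (1 / N) * (if Even (x.val + 1) then 1 - p2 else p2))
    -- distortion constraint
    (hdist : (∑ ω, if X1 ω ≠ X1h ω then μ ω else 0) ≤ D1) :
    cmi μ X1 (fun ω => (X1h ω, Sh ω)) Y ≥
      hb p2 + Real.logb 2 ((N : ℝ) / 2) - hb D1 - D1 * Real.logb 2 ((N : ℝ) - 1) :=
  integer_classification_converse_general N hN hNeven μ hμ0 hμ1 X1 Y X1h Sh p2 D1 hD11 hunif hXY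
    hdist
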